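/- Let Ã, B̃ ∈ T(l'×m'×n', ℂ) be non-degenerate 3-way arrays, and let A, B ∈ T(l×m×n, ℂ) (with l ≥ l', m ≥ m', n ≥ n') be their zero-paddings: a_{i,j,k} = ã_{i,j,k} when i ≤ l', j ≤ m', k ≤ n', and a_{i,j,k} = 0 otherwise, and similarly for B. Then there exist unitary matrices P ∈ U(l, ℂ), Q ∈ U(m, ℂ), R ∈ U(n, ℂ) with P A Q = B^R if and only if there exist unitary matrices P̃ ∈ U(l', ℂ), Q̃ ∈ U(m', ℂ), R̃ ∈ U(n', ℂ) with P̃ Ã Q̃ = B̃^{R̃}. -/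
import Mathlib

open Matrix

lemma sum_restrict {N N' : ℕ} (h : N' ≤ N) (f : Fin N → ℂ)
    (hf : ∀ i : Fin N, N' ≤ (i : ℕ) → f i = 0) :
    ∑ i, f i = ∑ i : Fin N', f (Fin.castLE h i) := by
  set g : ℕ → ℂ := fun i => if hi : i < N then f ⟨i, hi⟩ else 0 with hg
  have h1 : ∑ i : Fin N, f i = ∑ i ∈ Finset.range N, g i := by
    rw [← Fin.sum_univ_eq_sum_range]
    exact Finset.sum_congr rfl fun i _ => by simp [hg, i.isLt]
  have h2 : ∑ i : Fin N', f (Fin.castLE h i) = ∑ i ∈ Finset.range N', g i := by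
    rw [← Fin.sum_univ_eq_sum_range]
    refine Finset.sum_congr rfl fun i _ => ?_
    have : (i : ℕ) < N := lt_of_lt_of_le i.isLt h
    simp only [hg, this, dif_pos]
    rfl
  rw [h1, h2]
  refine (Finset.sum_subset (Finset.range_subset_range.mpr h) fun i hi hni => ?_).symm
  simp only [Finset.mem_range] at hi hni
  simp only [hg, hi, dif_pos]
  exact hf _ (le_of_not_gt hni)

lemma triple_mul_apply {l m : ℕ} (P : Matrix (Fin l) (Fin l) ℂ)
    (X : Matrix (Fin l) (Fin m) ℂ) (Q : Matrix (Fin m) (Fin m) ℂ) (i : Fin l) (j : Fin m) :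
    (P * X * Q) i j = ∑ s, (∑ t, P i t * X t s) * Q s j := by
  simp [Matrix.mul_apply]

lemma sum_smul_apply {n l m : ℕ} (c : Fin n → ℂ) (M : Fin n → Matrix (Fin l) (Fin m) ℂ)
    (i : Fin l) (j : Fin m) :
    (∑ k, c k • M k) i j = ∑ k, c k * M k i j := by
  simp [Matrix.sum_apply]

/-- corner of a unitary matrix with zero lower-left block is unitary -/
lemma corner_unitary {N N' : ℕ} (h : N' ≤ N) (U : Matrix (Fin N) (Fin N) ℂ)
    (hU : U ∈ Matrix.unitaryGroup (Fin N) ℂ)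
    (hz : ∀ i i' : Fin N, N' ≤ (i : ℕ) → (i' : ℕ) < N' → U i i' = 0) :
    (Matrix.of fun i i' : Fin N' => U (Fin.castLE h i) (Fin.castLE h i'))
      ∈ Matrix.unitaryGroup (Fin N') ℂ := by
  rw [Matrix.mem_unitaryGroup_iff']
  have hU' : star U * U = 1 := (Unitary.mem_iff.mp hU).1
  ext a b
  have := congrFun (congrFun hU' (Fin.castLE h a)) (Fin.castLE h b)
  rw [Matrix.mul_apply] at this
  rw [Matrix.mul_apply]
  have hr := sum_restrict h
    (fun i => star U (Fin.castLE h a) i * U i (Fin.castLE h b))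
    (fun i hi => by
      simp only [Matrix.star_apply, hz i (Fin.castLE h a) hi a.isLt, star_zero, zero_mul])
  rw [hr] at this
  rw [show ((1 : Matrix (Fin N) (Fin N) ℂ) (Fin.castLE h a) (Fin.castLE h b))
      = (1 : Matrix (Fin N') (Fin N') ℂ) a b by
    simp only [Matrix.one_apply, Fin.castLE_inj]] at this
  simpa using this

/-- padding a unitary matrix by the identity is unitary -/
lemma pad_unitary {N N' : ℕ} (h : N' ≤ N) (U : Matrix (Fin N') (Fin N') ℂ)
    (hU : U ∈ Matrix.unitaryGroup (Fin N') ℂ) :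
    (Matrix.of fun i i' : Fin N => if hc : (i : ℕ) < N' ∧ (i' : ℕ) < N'
      then U ⟨i, hc.1⟩ ⟨i', hc.2⟩ else if (i : ℕ) = (i' : ℕ) then 1 else 0)
      ∈ Matrix.unitaryGroup (Fin N) ℂ := by
  rw [Matrix.mem_unitaryGroup_iff']
  have hU' : star U * U = 1 := (Unitary.mem_iff.mp hU).1
  ext a b
  rw [Matrix.mul_apply]
  simp only [Matrix.star_apply, Matrix.of_apply]
  rcases lt_or_ge (a : ℕ) N' with ha | ha
  · rcases lt_or_ge (b : ℕ) N' with hb | hb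
    · have hr := sum_restrict h
        (fun i => star (if hc : (i:ℕ) < N' ∧ (a:ℕ) < N' then U ⟨i, hc.1⟩ ⟨a, hc.2⟩
            else if (i:ℕ) = (a:ℕ) then 1 else 0) *
          (if hc : (i:ℕ) < N' ∧ (b:ℕ) < N' then U ⟨i, hc.1⟩ ⟨b, hc.2⟩
            else if (i:ℕ) = (b:ℕ) then 1 else 0))
        (fun i hi => by
          have h1 : ¬ ((i:ℕ) < N' ∧ (a:ℕ) < N') := fun hc => absurd hc.1 (not_lt.mpr hi)
          have h2 : (i:ℕ) ≠ (a:ℕ) := fun he => absurd (he ▸ hi) (not_le.mpr ha)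
          simp [h1, h2])
      rw [hr]
      have := congrFun (congrFun hU' ⟨a, ha⟩) ⟨b, hb⟩
      rw [Matrix.mul_apply] at this
      simp only [Matrix.star_apply] at this
      have hcong : ∀ i : Fin N', i ∈ Finset.univ →
          (star (if hc : ((Fin.castLE h i : Fin N):ℕ) < N' ∧ (a:ℕ) < N'
              then U ⟨(Fin.castLE h i : Fin N), hc.1⟩ ⟨a, hc.2⟩
              else if ((Fin.castLE h i : Fin N):ℕ) = (a:ℕ) then 1 else 0) *
            (if hc : ((Fin.castLE h i : Fin N):ℕ) < N' ∧ (b:ℕ) < N'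
              then U ⟨(Fin.castLE h i : Fin N), hc.1⟩ ⟨b, hc.2⟩
              else if ((Fin.castLE h i : Fin N):ℕ) = (b:ℕ) then 1 else 0))
          = star (U i ⟨a, ha⟩) * U i ⟨b, hb⟩ := by
        intro i _
        have hi : ((Fin.castLE h i : Fin N) : ℕ) < N' := i.isLt
        simp only [hi, ha, hb, and_self, dif_pos]
        rfl
      rw [Finset.sum_congr rfl hcong, this, Matrix.one_apply, Matrix.one_apply]
      simp [Fin.ext_iff]
    · have hab : (a:ℕ) ≠ (b:ℕ) := fun he => absurd (he ▸ hb) (not_le.mpr ha)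
      rw [Matrix.one_apply_ne (by simp [Fin.ext_iff]; omega)]
      refine Finset.sum_eq_zero fun i _ => ?_
      have h2 : ¬ ((i:ℕ) < N' ∧ (b:ℕ) < N') := fun hc => absurd hc.2 (not_lt.mpr hb)
      rcases lt_or_ge (i:ℕ) N' with hi | hi
      · have h3 : (i:ℕ) ≠ (b:ℕ) := by omega
        simp [h2, h3]
      · have h1 : ¬ ((i:ℕ) < N' ∧ (a:ℕ) < N') := fun hc => absurd hc.1 (not_lt.mpr hi)
        have h3 : (i:ℕ) ≠ (a:ℕ) := by omega
        simp [h1, h3]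
  · have h1 : ∀ i : Fin N, ¬ ((i:ℕ) < N' ∧ (a:ℕ) < N') := fun i hc => absurd hc.2 (not_lt.mpr ha)
    have key : ∀ i : Fin N,
        star (if hc : (i:ℕ) < N' ∧ (a:ℕ) < N' then U ⟨i, hc.1⟩ ⟨a, hc.2⟩
            else if (i:ℕ) = (a:ℕ) then 1 else 0) = if i = a then 1 else 0 := by
      intro i
      rcases eq_or_ne i a with he | he
      · simp [he, not_lt.mpr ha]
      · have hne : (i:ℕ) ≠ (a:ℕ) := by simpa [Fin.ext_iff] using he
        simp [h1 i, hne, he]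
    calc ∑ i : Fin N, _ = ∑ i : Fin N, (if i = a then (1:ℂ) else 0) *
          (if hc : (i:ℕ) < N' ∧ (b:ℕ) < N' then U ⟨i, hc.1⟩ ⟨b, hc.2⟩
            else if (i:ℕ) = (b:ℕ) then 1 else 0) := by
          refine Finset.sum_congr rfl fun i _ => by rw [key i]
      _ = _ := by
          rw [Finset.sum_eq_single a]
          · have hc : ¬ ((a:ℕ) < N' ∧ (b:ℕ) < N') := fun hc => absurd hc.1 (not_lt.mpr ha)
            simp [hc, Matrix.one_apply, Fin.ext_iff]
          · intro i _ hi; simp [hi]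
          · intro hh; exact absurd (Finset.mem_univ a) hh

/-- A 3-way array (given by its tuple of frontal slices) is non-degenerate if its
horizontal, lateral and frontal slices are each linearly independent families. -/
def Nondegenerate₃ {l m n : ℕ} (A : Fin n → Matrix (Fin l) (Fin m) ℂ) : Prop :=
  LinearIndependent ℂ (fun i : Fin l => fun (j : Fin m) (k : Fin n) => A k i j) ∧
  LinearIndependent ℂ (fun j : Fin m => fun (i : Fin l) (k : Fin n) => A k i j) ∧
  LinearIndependent ℂ A

/-- Let `Ã, B̃ ∈ T(l'×m'×n', ℂ)` be non-degenerate and let `A, B` be their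
zero-paddings to size `l×m×n`. Then `A` and `B` are unitarily isomorphic iff `Ã` and `B̃`
are unitarily isomorphic. -/
theorem stmt_6 (l m n l' m' n' : ℕ) (hl : l' ≤ l) (hm : m' ≤ m) (hn : n' ≤ n)
    (At Bt : Fin n' → Matrix (Fin l') (Fin m') ℂ)
    (hAt : Nondegenerate₃ At) (hBt : Nondegenerate₃ Bt)
    (A B : Fin n → Matrix (Fin l) (Fin m) ℂ)
    (hA : ∀ (k : Fin n) (i : Fin l) (j : Fin m),
      A k i j = if h : (i : ℕ) < l' ∧ (j : ℕ) < m' ∧ (k : ℕ) < n'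
        then At ⟨k, h.2.2⟩ ⟨i, h.1⟩ ⟨j, h.2.1⟩ else 0)
    (hB : ∀ (k : Fin n) (i : Fin l) (j : Fin m),
      B k i j = if h : (i : ℕ) < l' ∧ (j : ℕ) < m' ∧ (k : ℕ) < n'
        then Bt ⟨k, h.2.2⟩ ⟨i, h.1⟩ ⟨j, h.2.1⟩ else 0) :
    (∃ P ∈ Matrix.unitaryGroup (Fin l) ℂ, ∃ Q ∈ Matrix.unitaryGroup (Fin m) ℂ,
        ∃ R ∈ Matrix.unitaryGroup (Fin n) ℂ,
        ∀ k : Fin n, P * A k * Q = ∑ k' : Fin n, R k' k • B k')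
      ↔ (∃ Pt ∈ Matrix.unitaryGroup (Fin l') ℂ, ∃ Qt ∈ Matrix.unitaryGroup (Fin m') ℂ,
          ∃ Rt ∈ Matrix.unitaryGroup (Fin n') ℂ,
          ∀ k : Fin n', Pt * At k * Qt = ∑ k' : Fin n', Rt k' k • Bt k') := by
  have hAz : ∀ (k : Fin n) (i : Fin l) (j : Fin m),
      ¬ ((i:ℕ) < l' ∧ (j:ℕ) < m' ∧ (k:ℕ) < n') → A k i j = 0 :=
    fun k i j hc => by rw [hA]; exact dif_neg hc
  have hBz : ∀ (k : Fin n) (i : Fin l) (j : Fin m),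
      ¬ ((i:ℕ) < l' ∧ (j:ℕ) < m' ∧ (k:ℕ) < n') → B k i j = 0 :=
    fun k i j hc => by rw [hB]; exact dif_neg hc
  have hAe : ∀ (k : Fin n') (t : Fin l') (s : Fin m'),
      A (Fin.castLE hn k) (Fin.castLE hl t) (Fin.castLE hm s) = At k t s := by
    intro k t s
    rw [hA, dif_pos ⟨t.isLt, s.isLt, k.isLt⟩]
    rfl
  have hBe : ∀ (k : Fin n') (t : Fin l') (s : Fin m'),
      B (Fin.castLE hn k) (Fin.castLE hl t) (Fin.castLE hm s) = Bt k t s := by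
    intro k t s
    rw [hB, dif_pos ⟨t.isLt, s.isLt, k.isLt⟩]
    rfl
  constructor
  · -- hard direction
    rintro ⟨P, hP, Q, hQ, R, hR, heq⟩
    have heq' : ∀ (k : Fin n) (i : Fin l) (j : Fin m),
        ∑ s : Fin m, (∑ t : Fin l, P i t * A k t s) * Q s j
          = ∑ k' : Fin n, R k' k * B k' i j := by
      intro k i j
      rw [← triple_mul_apply, ← sum_smul_apply, heq k]
    -- P has zero lower-left block
    have hPz : ∀ (i : Fin l), l' ≤ (i:ℕ) → ∀ t : Fin l', P i (Fin.castLE hl t) = 0 := by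
      intro i hi
      have hrow : ∀ (k : Fin n) (j : Fin m), (∑ t : Fin l, P i t * A k t j) = 0 := by
        intro k j
        have hq : Q * star Q = 1 := (Unitary.mem_iff.mp hQ).2
        have h1 : ∀ j' : Fin m, (P * A k * Q) i j' = 0 := by
          intro j'
          rw [heq k, sum_smul_apply]
          refine Finset.sum_eq_zero fun k' _ => ?_
          rw [hBz k' i j' (fun hc => absurd hc.1 (not_lt.mpr hi)), mul_zero]
        have h2 : (P * A k) i j = 0 := by
          have hM : P * A k = P * A k * Q * star Q := by
            rw [Matrix.mul_assoc (P * A k) Q (star Q), hq, Matrix.mul_one]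
          rw [hM, Matrix.mul_apply]
          exact Finset.sum_eq_zero fun s _ => by rw [h1 s, zero_mul]
        rw [Matrix.mul_apply] at h2
        exact h2
      refine Fintype.linearIndependent_iff.mp hAt.1 (fun t => P i (Fin.castLE hl t)) ?_
      funext s k
      simp only [Finset.sum_apply, Pi.smul_apply, smul_eq_mul, Pi.zero_apply]
      have h3 := hrow (Fin.castLE hn k) (Fin.castLE hm s)
      rw [sum_restrict hl _ (fun t ht => by
        rw [hAz _ t _ (fun hc => absurd hc.1 (not_lt.mpr ht)), mul_zero])] at h3
      rw [← h3]
      exact Finset.sum_congr rfl fun t _ => by rw [hAe]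
    -- Q has zero upper-right block
    have hQz : ∀ (j : Fin m), m' ≤ (j:ℕ) → ∀ s : Fin m', Q (Fin.castLE hm s) j = 0 := by
      intro j hj
      have hcol : ∀ (k : Fin n) (i : Fin l), (∑ s : Fin m, A k i s * Q s j) = 0 := by
        intro k i
        have hp : star P * P = 1 := (Unitary.mem_iff.mp hP).1
        have h1 : ∀ i' : Fin l, (P * A k * Q) i' j = 0 := by
          intro i'
          rw [heq k, sum_smul_apply]
          refine Finset.sum_eq_zero fun k' _ => ?_
          rw [hBz k' i' j (fun hc => absurd hc.2.1 (not_lt.mpr hj)), mul_zero]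
        have h2 : (A k * Q) i j = 0 := by
          have hM : A k * Q = star P * (P * A k * Q) := by
            rw [← Matrix.mul_assoc, ← Matrix.mul_assoc, hp, Matrix.one_mul]
          rw [hM, Matrix.mul_apply]
          exact Finset.sum_eq_zero fun t _ => by rw [h1 t, mul_zero]
        rw [Matrix.mul_apply] at h2
        exact h2
      refine Fintype.linearIndependent_iff.mp hAt.2.1 (fun s => Q (Fin.castLE hm s) j) ?_
      funext t k
      simp only [Finset.sum_apply, Pi.smul_apply, smul_eq_mul, Pi.zero_apply]
      have h3 := hcol (Fin.castLE hn k) (Fin.castLE hl t)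
      rw [sum_restrict hm _ (fun s hs => by
        rw [hAz _ _ s (fun hc => absurd hc.2.1 (not_lt.mpr hs)), zero_mul])] at h3
      rw [← h3]
      exact Finset.sum_congr rfl fun s _ => by rw [hAe, mul_comm]
    -- R has zero upper-right block
    have hRz : ∀ (k : Fin n), n' ≤ (k:ℕ) → ∀ k' : Fin n', R (Fin.castLE hn k') k = 0 := by
      intro k hk
      refine Fintype.linearIndependent_iff.mp hBt.2.2 (fun k' => R (Fin.castLE hn k') k) ?_
      have hAk : A k = 0 := by
        ext i j
        exact hAz k i j (fun hc => absurd hc.2.2 (not_lt.mpr hk))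
      have h0 : ∀ (i : Fin l) (j : Fin m), ∑ k' : Fin n, R k' k * B k' i j = 0 := by
        intro i j
        rw [← sum_smul_apply, ← heq k, hAk, Matrix.mul_zero, Matrix.zero_mul]
        rfl
      ext i j
      simp only [Matrix.sum_apply, Matrix.smul_apply, smul_eq_mul, Matrix.zero_apply]
      have h3 := h0 (Fin.castLE hl i) (Fin.castLE hm j)
      rw [sum_restrict hn _ (fun k'' hk'' => by
        rw [hBz k'' _ _ (fun hc => absurd hc.2.2 (not_lt.mpr hk'')), mul_zero])] at h3
      rw [← h3]
      exact Finset.sum_congr rfl fun k'' _ => by rw [hBe]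
    -- assemble
    refine ⟨Matrix.of fun i t : Fin l' => P (Fin.castLE hl i) (Fin.castLE hl t),
      corner_unitary hl P hP (fun i i' hi hi' => by
        have := hPz i hi ⟨i', hi'⟩
        rwa [show Fin.castLE hl ⟨(i':ℕ), hi'⟩ = i' from Fin.ext rfl] at this),
      Matrix.of fun s s' : Fin m' => Q (Fin.castLE hm s) (Fin.castLE hm s'), ?_,
      Matrix.of fun a b : Fin n' => R (Fin.castLE hn a) (Fin.castLE hn b), ?_, ?_⟩
    · -- corner of Q unitary, via star trick
      have hsQ : (Matrix.of fun s s' : Fin m' =>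
          (star Q) (Fin.castLE hm s) (Fin.castLE hm s')) ∈ Matrix.unitaryGroup (Fin m') ℂ := by
        refine corner_unitary hm (star Q) (Unitary.star_mem hQ) (fun i i' hi hi' => ?_)
        rw [Matrix.star_apply]
        have := hQz i hi ⟨i', hi'⟩
        rw [show Fin.castLE hm ⟨(i':ℕ), hi'⟩ = i' from Fin.ext rfl] at this
        rw [this, star_zero]
      have hEq : (Matrix.of fun s s' : Fin m' => (star Q) (Fin.castLE hm s) (Fin.castLE hm s'))
          = star (Matrix.of fun s s' : Fin m' => Q (Fin.castLE hm s) (Fin.castLE hm s')) := by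
        ext a b
        simp [Matrix.star_apply]
      rw [hEq] at hsQ
      have := Unitary.star_mem hsQ
      rwa [star_star] at this
    · -- corner of R unitary
      have hsR : (Matrix.of fun a b : Fin n' =>
          (star R) (Fin.castLE hn a) (Fin.castLE hn b)) ∈ Matrix.unitaryGroup (Fin n') ℂ := by
        refine corner_unitary hn (star R) (Unitary.star_mem hR) (fun i i' hi hi' => ?_)
        rw [Matrix.star_apply]
        have := hRz i hi ⟨i', hi'⟩
        rw [show Fin.castLE hn ⟨(i':ℕ), hi'⟩ = i' from Fin.ext rfl] at this
        rw [this, star_zero]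
      have hEq : (Matrix.of fun a b : Fin n' => (star R) (Fin.castLE hn a) (Fin.castLE hn b))
          = star (Matrix.of fun a b : Fin n' => R (Fin.castLE hn a) (Fin.castLE hn b)) := by
        ext a b
        simp [Matrix.star_apply]
      rw [hEq] at hsR
      have := Unitary.star_mem hsR
      rwa [star_star] at this
    · -- the equation for the corners
      intro k
      ext i j
      rw [triple_mul_apply, sum_smul_apply]
      have h3 := heq' (Fin.castLE hn k) (Fin.castLE hl i) (Fin.castLE hm j)
      rw [sum_restrict hm _ (fun s hs => by
        rw [Finset.sum_eq_zero fun t _ => by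
          rw [hAz _ t s (fun hc => absurd hc.2.1 (not_lt.mpr hs)), mul_zero], zero_mul])] at h3
      rw [sum_restrict hn (fun k'' => R k'' (Fin.castLE hn k) * B k'' (Fin.castLE hl i) (Fin.castLE hm j))
        (fun k'' hk'' => by
          show R k'' (Fin.castLE hn k) * B k'' (Fin.castLE hl i) (Fin.castLE hm j) = 0
          rw [hBz k'' _ _ (fun hc => absurd hc.2.2 (not_lt.mpr hk'')), mul_zero])] at h3
      have h4 : ∀ s : Fin m', (∑ t : Fin l, P (Fin.castLE hl i) t * A (Fin.castLE hn k) t (Fin.castLE hm s))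
          = ∑ t : Fin l', P (Fin.castLE hl i) (Fin.castLE hl t) * At k t s := by
        intro s
        rw [sum_restrict hl _ (fun t ht => by
          rw [hAz _ t _ (fun hc => absurd hc.1 (not_lt.mpr ht)), mul_zero])]
        exact Finset.sum_congr rfl fun t _ => by rw [hAe]
      calc ∑ s : Fin m', (∑ t : Fin l', (Matrix.of fun i t : Fin l' => P (Fin.castLE hl i) (Fin.castLE hl t)) i t * At k t s)
            * (Matrix.of fun s s' : Fin m' => Q (Fin.castLE hm s) (Fin.castLE hm s')) s j
          = ∑ s : Fin m', (∑ t : Fin l, P (Fin.castLE hl i) t * A (Fin.castLE hn k) t (Fin.castLE hm s))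
            * Q (Fin.castLE hm s) (Fin.castLE hm j) := by
            refine Finset.sum_congr rfl fun s _ => ?_
            rw [h4 s]
            rfl
        _ = ∑ k'' : Fin n', R (Fin.castLE hn k'') (Fin.castLE hn k) * B (Fin.castLE hn k'') (Fin.castLE hl i) (Fin.castLE hm j) := h3
        _ = ∑ k'' : Fin n', (Matrix.of fun a b : Fin n' => R (Fin.castLE hn a) (Fin.castLE hn b)) k'' k * Bt k'' i j := by
            refine Finset.sum_congr rfl fun k'' _ => by rw [hBe]; rfl
  · -- easy direction
    rintro ⟨Pt, hPt, Qt, hQt, Rt, hRt, heq⟩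
    refine ⟨Matrix.of fun i i' : Fin l => if hc : (i:ℕ) < l' ∧ (i':ℕ) < l'
        then Pt ⟨i, hc.1⟩ ⟨i', hc.2⟩ else if (i:ℕ) = (i':ℕ) then 1 else 0,
      pad_unitary hl Pt hPt,
      Matrix.of fun s s' : Fin m => if hc : (s:ℕ) < m' ∧ (s':ℕ) < m'
        then Qt ⟨s, hc.1⟩ ⟨s', hc.2⟩ else if (s:ℕ) = (s':ℕ) then 1 else 0,
      pad_unitary hm Qt hQt,
      Matrix.of fun a b : Fin n => if hc : (a:ℕ) < n' ∧ (b:ℕ) < n'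
        then Rt ⟨a, hc.1⟩ ⟨b, hc.2⟩ else if (a:ℕ) = (b:ℕ) then 1 else 0,
      pad_unitary hn Rt hRt, ?_⟩
    intro k
    set P : Matrix (Fin l) (Fin l) ℂ := Matrix.of fun i i' : Fin l => if hc : (i:ℕ) < l' ∧ (i':ℕ) < l'
        then Pt ⟨i, hc.1⟩ ⟨i', hc.2⟩ else if (i:ℕ) = (i':ℕ) then 1 else 0 with hPdef
    set Q : Matrix (Fin m) (Fin m) ℂ := Matrix.of fun s s' : Fin m => if hc : (s:ℕ) < m' ∧ (s':ℕ) < m'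
        then Qt ⟨s, hc.1⟩ ⟨s', hc.2⟩ else if (s:ℕ) = (s':ℕ) then 1 else 0 with hQdef
    set R : Matrix (Fin n) (Fin n) ℂ := Matrix.of fun a b : Fin n => if hc : (a:ℕ) < n' ∧ (b:ℕ) < n'
        then Rt ⟨a, hc.1⟩ ⟨b, hc.2⟩ else if (a:ℕ) = (b:ℕ) then 1 else 0 with hRdef
    have hPe : ∀ (i : Fin l) (t : Fin l'), P i (Fin.castLE hl t)
        = if hi : (i:ℕ) < l' then Pt ⟨i, hi⟩ t else 0 := by
      intro i t
      rcases lt_or_ge (i:ℕ) l' with hi | hi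
      · rw [dif_pos hi]
        rw [hPdef]
        show (if hc : (i:ℕ) < l' ∧ ((Fin.castLE hl t : Fin l):ℕ) < l' then _ else _) = _
        rw [dif_pos ⟨hi, t.isLt⟩]
        rfl
      · rw [dif_neg (not_lt.mpr hi)]
        rw [hPdef]
        show (if hc : (i:ℕ) < l' ∧ ((Fin.castLE hl t : Fin l):ℕ) < l' then _ else _) = _
        rw [dif_neg (fun hc => absurd hc.1 (not_lt.mpr hi))]
        have : (i:ℕ) ≠ ((Fin.castLE hl t : Fin l):ℕ) := by
          have := t.isLt; simp only [Fin.coe_castLE]; omega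
        rw [if_neg this]
    have hQe : ∀ (s : Fin m') (j : Fin m), Q (Fin.castLE hm s) j
        = if hj : (j:ℕ) < m' then Qt s ⟨j, hj⟩ else 0 := by
      intro s j
      rcases lt_or_ge (j:ℕ) m' with hj | hj
      · rw [dif_pos hj]
        rw [hQdef]
        show (if hc : ((Fin.castLE hm s : Fin m):ℕ) < m' ∧ (j:ℕ) < m' then _ else _) = _
        rw [dif_pos ⟨s.isLt, hj⟩]
        rfl
      · rw [dif_neg (not_lt.mpr hj)]
        rw [hQdef]
        show (if hc : ((Fin.castLE hm s : Fin m):ℕ) < m' ∧ (j:ℕ) < m' then _ else _) = _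
        rw [dif_neg (fun hc => absurd hc.2 (not_lt.mpr hj))]
        have : ((Fin.castLE hm s : Fin m):ℕ) ≠ (j:ℕ) := by
          have := s.isLt; simp only [Fin.coe_castLE]; omega
        rw [if_neg this]
    have hRe : ∀ (k' : Fin n') (k : Fin n), R (Fin.castLE hn k') k
        = if hk : (k:ℕ) < n' then Rt k' ⟨k, hk⟩ else 0 := by
      intro k' k
      rcases lt_or_ge (k:ℕ) n' with hk | hk
      · rw [dif_pos hk]
        rw [hRdef]
        show (if hc : ((Fin.castLE hn k' : Fin n):ℕ) < n' ∧ (k:ℕ) < n' then _ else _) = _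
        rw [dif_pos ⟨k'.isLt, hk⟩]
        rfl
      · rw [dif_neg (not_lt.mpr hk)]
        rw [hRdef]
        show (if hc : ((Fin.castLE hn k' : Fin n):ℕ) < n' ∧ (k:ℕ) < n' then _ else _) = _
        rw [dif_neg (fun hc => absurd hc.2 (not_lt.mpr hk))]
        have : ((Fin.castLE hn k' : Fin n):ℕ) ≠ (k:ℕ) := by
          have := k'.isLt; simp only [Fin.coe_castLE]; omega
        rw [if_neg this]
    ext i j
    rw [triple_mul_apply, sum_smul_apply]
    -- restrict sums
    have hL : ∑ s : Fin m, (∑ t : Fin l, P i t * A k t s) * Q s j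
        = ∑ s : Fin m', (∑ t : Fin l', P i (Fin.castLE hl t) * A k (Fin.castLE hl t) (Fin.castLE hm s)) * Q (Fin.castLE hm s) j := by
      rw [sum_restrict hm _ (fun s hs => by
        rw [Finset.sum_eq_zero fun t _ => by
          rw [hAz _ t s (fun hc => absurd hc.2.1 (not_lt.mpr hs)), mul_zero], zero_mul])]
      refine Finset.sum_congr rfl fun s _ => ?_
      rw [sum_restrict hl _ (fun t ht => by
        rw [hAz _ t _ (fun hc => absurd hc.1 (not_lt.mpr ht)), mul_zero])]
    have hRs : ∑ k' : Fin n, R k' k * B k' i j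
        = ∑ k' : Fin n', R (Fin.castLE hn k') k * B (Fin.castLE hn k') i j := by
      rw [sum_restrict hn _ (fun k'' hk'' => by
        rw [hBz k'' _ _ (fun hc => absurd hc.2.2 (not_lt.mpr hk'')), mul_zero])]
    rw [hL, hRs]
    rcases lt_or_ge (k:ℕ) n' with hk | hk
    · -- k small
      rcases lt_or_ge (i:ℕ) l' with hi | hi
      · rcases lt_or_ge (j:ℕ) m' with hj | hj
        · -- all small: use heq
          have hmain := congrFun (congrFun (heq ⟨k, hk⟩) ⟨i, hi⟩) ⟨j, hj⟩
          rw [triple_mul_apply, sum_smul_apply] at hmain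
          calc ∑ s : Fin m', (∑ t : Fin l', P i (Fin.castLE hl t) * A k (Fin.castLE hl t) (Fin.castLE hm s)) * Q (Fin.castLE hm s) j
              = ∑ s : Fin m', (∑ t : Fin l', Pt ⟨i, hi⟩ t * At ⟨k, hk⟩ t s) * Qt s ⟨j, hj⟩ := by
                refine Finset.sum_congr rfl fun s _ => ?_
                rw [hQe s j, dif_pos hj]
                congr 1
                refine Finset.sum_congr rfl fun t _ => ?_
                rw [hPe i t, dif_pos hi]
                congr 1
                rw [hA, dif_pos ⟨t.isLt, s.isLt, hk⟩]
                rfl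
            _ = ∑ k' : Fin n', Rt k' ⟨k, hk⟩ * Bt k' ⟨i, hi⟩ ⟨j, hj⟩ := hmain
            _ = ∑ k' : Fin n', R (Fin.castLE hn k') k * B (Fin.castLE hn k') i j := by
                refine Finset.sum_congr rfl fun k' _ => ?_
                rw [hRe k' k, dif_pos hk, hB, dif_pos ⟨hi, hj, k'.isLt⟩]
                rfl
        · -- j large: both sides zero
          rw [Finset.sum_eq_zero fun s _ => by
              rw [hQe s j, dif_neg (not_lt.mpr hj), mul_zero],
            Finset.sum_eq_zero fun k' _ => by
              rw [hBz _ i j (fun hc => absurd hc.2.1 (not_lt.mpr hj)), mul_zero]]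
      · -- i large: both sides zero
        rw [Finset.sum_eq_zero fun s _ => by
            rw [Finset.sum_eq_zero fun t _ => by
              rw [hPe i t, dif_neg (not_lt.mpr hi), zero_mul], zero_mul],
          Finset.sum_eq_zero fun k' _ => by
            rw [hBz _ i j (fun hc => absurd hc.1 (not_lt.mpr hi)), mul_zero]]
    · -- k large: both sides zero
      rw [Finset.sum_eq_zero fun s _ => by
          rw [Finset.sum_eq_zero fun t _ => by
            rw [hAz k _ _ (fun hc => absurd hc.2.2 (not_lt.mpr hk)), mul_zero], zero_mul],
        Finset.sum_eq_zero fun k' _ => by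
          rw [hRe k' k, dif_neg (not_lt.mpr hk), zero_mul]]
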